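/- Let P ∈ ℂ^{n×n} be Hermitian positive definite and A_F ∈ ℂ^{n×n} satisfy P⁻¹A_Fᴴ + A_F P⁻¹ = 0. Then, with T := P^{1/2} the Hermitian positive definite square root of P, the matrix T A_F T⁻¹ is skew-Hermitian; consequently every eigenvalue of A_F is purely imaginary (lies on the imaginary axis). -/

import Mathlib

open Matrix
open scoped ComplexOrder

namespace Matrix.PosSemidef

/-- The positive semidefinite square root of a positive semidefinite matrix
(the Mathlib definition of December 2024, since removed). -/
noncomputable def sqrt {n : Type*} [Fintype n] [DecidableEq n] {𝕜 : Type*} [RCLike 𝕜]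
    {A : Matrix n n 𝕜} (hA : PosSemidef A) : Matrix n n 𝕜 :=
  hA.1.eigenvectorUnitary.1 * diagonal ((↑) ∘ (√·) ∘ hA.1.eigenvalues) *
  (star hA.1.eigenvectorUnitary : Matrix n n 𝕜)

end Matrix.PosSemidef

/-!
Multiplying the hypothesis by `P` on both sides gives the Lyapunov form `A_Fᴴ P + P A_F = 0`,
i.e. `A_F` is skew-adjoint for the inner product `⟪x, y⟫_P = xᴴ P y`. Writing `P = T T` with
`T` Hermitian, this says exactly that `T A_F T⁻¹` is skew-Hermitian. For an eigenvector `v` of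
`A_F` with eigenvalue `μ`, the Lyapunov form gives `(conj μ + μ) vᴴ P v = 0`, and `vᴴ P v > 0`.
-/

namespace Matrix

variable {n : Type*} [Fintype n] [DecidableEq n]

namespace PosSemidef

variable {𝕜 : Type*} [RCLike 𝕜] {A : Matrix n n 𝕜}

theorem conjTranspose_sqrt (hA : A.PosSemidef) : hA.sqrtᴴ = hA.sqrt := by
  have hd : star (RCLike.ofReal ∘ (√·) ∘ hA.1.eigenvalues : n → 𝕜) =
      RCLike.ofReal ∘ (√·) ∘ hA.1.eigenvalues :=
    funext fun _ => RCLike.conj_ofReal _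
  simp only [sqrt, conjTranspose_mul, diagonal_conjTranspose, hd, star_eq_conjTranspose,
    conjTranspose_conjTranspose, mul_assoc]

theorem sqrt_mul_self (hA : A.PosSemidef) : hA.sqrt * hA.sqrt = A := by
  conv_rhs => rw [hA.1.spectral_theorem, Unitary.conjStarAlgAut_apply]
  have hd : diagonal ((↑) ∘ (√·) ∘ hA.1.eigenvalues) *
      diagonal ((↑) ∘ (√·) ∘ hA.1.eigenvalues) =
        diagonal (RCLike.ofReal ∘ hA.1.eigenvalues : n → 𝕜) := by
    rw [diagonal_mul_diagonal]
    congr 1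
    ext i
    simp only [Function.comp_apply, ← RCLike.ofReal_mul,
      Real.mul_self_sqrt (hA.eigenvalues_nonneg i)]
  simp only [sqrt, ← hd, mul_assoc]
  rw [← mul_assoc (star _), Unitary.coe_star_mul_self, one_mul]

end PosSemidef

theorem PosDef.isUnit_det_sqrt {𝕜 : Type*} [RCLike 𝕜] {A : Matrix n n 𝕜} (hA : A.PosDef) :
    IsUnit hA.posSemidef.sqrt.det := by
  have hP : IsUnit (hA.posSemidef.sqrt * hA.posSemidef.sqrt).det := by
    rw [hA.posSemidef.sqrt_mul_self]
    exact (isUnit_iff_isUnit_det A).mp hA.isUnit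
  rw [det_mul] at hP
  exact isUnit_of_mul_isUnit_left hP

section CommRing

variable {R : Type*} [CommRing R] [StarRing R] {A P T : Matrix n n R}

theorem conjTranspose_mul_add_mul_eq_zero_of_nonsing_inv (hP : IsUnit P.det)
    (h : P⁻¹ * Aᴴ + A * P⁻¹ = 0) : Aᴴ * P + P * A = 0 := by
  calc Aᴴ * P + P * A = P * (P⁻¹ * Aᴴ + A * P⁻¹) * P := by
        simp [mul_add, add_mul, mul_assoc, hP]
    _ = 0 := by rw [h, mul_zero, zero_mul]

theorem conjTranspose_mul_mul_inv_eq_neg (hTH : Tᴴ = T) (hT : IsUnit T.det)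
    (h : Aᴴ * (T * T) + T * T * A = 0) : (T * A * T⁻¹)ᴴ = -(T * A * T⁻¹) := by
  have hA : Aᴴ * T * T = -(T * T * A) := by rw [mul_assoc, eq_neg_of_add_eq_zero_left h]
  calc (T * A * T⁻¹)ᴴ = T⁻¹ * (Aᴴ * T * T) * T⁻¹ := by
        simp [conjTranspose_nonsing_inv, hTH, mul_assoc, hT]
    _ = -(T * A * T⁻¹) := by
        simp [hA, mul_assoc, hT]

end CommRing

theorem re_eq_zero_of_mem_spectrum_of_conjTranspose_mul_add_mul_eq_zero {𝕜 : Type*} [RCLike 𝕜]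
    {A P : Matrix n n 𝕜} (hP : P.PosDef) (h : Aᴴ * P + P * A = 0) {μ : 𝕜}
    (hμ : μ ∈ spectrum 𝕜 A) : RCLike.re μ = 0 := by
  rw [← spectrum_toLin', ← Module.End.hasEigenvalue_iff_mem_spectrum] at hμ
  obtain ⟨v, hv⟩ := hμ.exists_hasEigenvector
  have hAv : A *ᵥ v = μ • v := by simpa using hv.apply_eq_smul
  have hq : 0 < star v ⬝ᵥ (P *ᵥ v) := hP.dotProduct_mulVec_pos hv.2
  have hsum : (μ + star μ) * (star v ⬝ᵥ (P *ᵥ v)) = 0 := by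
    have := congrArg (fun M => star v ⬝ᵥ (M *ᵥ v)) h
    simp only [add_mulVec, ← mulVec_mulVec, dotProduct_add, zero_mulVec, dotProduct_zero,
      dotProduct_mulVec _ Aᴴ, vecMul_conjTranspose, star_star, hAv, star_smul, mulVec_smul,
      smul_dotProduct, dotProduct_smul, smul_eq_mul] at this
    rw [add_mul, add_comm, ← this]
  have hre : (2 * RCLike.re μ : 𝕜) = 0 := by
    rw [← RCLike.add_conj]
    exact (mul_eq_zero.mp hsum).resolve_right hq.ne'
  simpa using hre

end Matrix

/-- if `P ≻ 0` and `P⁻¹A_Fᴴ + A_F P⁻¹ = 0`, then with `T := P^{1/2}`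
the matrix `T A_F T⁻¹` is skew-Hermitian, and every eigenvalue of `A_F` is
purely imaginary. -/
theorem skewHermitian_of_central_equation {n : ℕ}
    (P AF : Matrix (Fin n) (Fin n) ℂ) (hP : P.PosDef)
    (h : P⁻¹ * AFᴴ + AF * P⁻¹ = 0) :
    (hP.posSemidef.sqrt * AF * (hP.posSemidef.sqrt)⁻¹)ᴴ =
        -(hP.posSemidef.sqrt * AF * (hP.posSemidef.sqrt)⁻¹) ∧
    ∀ μ ∈ spectrum ℂ AF, μ.re = 0 := by
  have hLyap : AFᴴ * P + P * AF = 0 :=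
    conjTranspose_mul_add_mul_eq_zero_of_nonsing_inv ((isUnit_iff_isUnit_det P).mp hP.isUnit) h
  constructor
  · apply conjTranspose_mul_mul_inv_eq_neg hP.posSemidef.conjTranspose_sqrt hP.isUnit_det_sqrt
    rwa [hP.posSemidef.sqrt_mul_self]
  · intro μ hμ
    exact re_eq_zero_of_mem_spectrum_of_conjTranspose_mul_add_mul_eq_zero hP hLyap hμ
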